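/- The feedback coefficient for the impact state satisfies g_t := −ε_t⁻¹(B_t + λ_t C_t) < 0 for every t ∈ [0, T) (a higher impact state causes slower selling). -/

import Mathlib

open Set MeasureTheory Matrix

/-!
Write `y = B + λC` (so that `g = -ε⁻¹ y`), `m = AC - B²` and `κ = 2β + γ̇ > 0`. The Riccati
equations give `(λC - 1)' = κ (λC - 1) + λ ε⁻¹ y²`, `m' = c m - A κ / λ` and
`y' = a y - β λC + κ (λC - 1)` with bounded coefficients `a`, `c`, and all three functions vanish
at `T`. Going backwards from `T`: `λC - 1` never becomes positive, since it increases wherever it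
is positive; `m` stays positive as long as `A` does, since it can only cross zero downwards; and
`A` stays positive, since at a last zero `τ` of `A` the Gronwall bound for `m` would give
`m(τ) > 0`, whereas `m(τ) = -B(τ)² ≤ 0`. Then `AC > B²` forces `C > 0`, so at a zero of `y`
we have `y' = -β λC + κ (λC - 1) < 0`: `y` too can only cross zero downwards, hence `y > 0`
on `[0, T)`.
-/

/-- Market parameters: time horizon `T > 0` and bounded measurable coefficient functions
`β, λ, ε, θ, σ : [0,T] → ℝ` with `β > 0`, `σ ≥ 0`, `λ` and `ε` positive and bounded away
from zero, `λ` differentiable with bounded derivative `lam'`, and the no-arbitrage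
condition `2β_t + γ̇_t > 0` where `γ = log λ` (so `γ̇ = λ'/λ`). -/
structure Params where
  T : ℝ
  beta : ℝ → ℝ
  lam : ℝ → ℝ
  lam' : ℝ → ℝ
  eps : ℝ → ℝ
  theta : ℝ → ℝ
  sigma : ℝ → ℝ
  hT : 0 < T
  hbeta_meas : Measurable beta
  htheta_meas : Measurable theta
  hsigma_meas : Measurable sigma
  heps_meas : Measurable eps
  hbeta_bdd : ∃ M, ∀ t ∈ Icc 0 T, |beta t| ≤ M
  htheta_bdd : ∃ M, ∀ t ∈ Icc 0 T, |theta t| ≤ M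
  hsigma_bdd : ∃ M, ∀ t ∈ Icc 0 T, |sigma t| ≤ M
  hbeta_pos : ∀ t ∈ Icc 0 T, 0 < beta t
  hsigma_nonneg : ∀ t ∈ Icc 0 T, 0 ≤ sigma t
  heps_lb : ∃ c, 0 < c ∧ ∀ t ∈ Icc 0 T, c ≤ eps t
  heps_ub : ∃ M, ∀ t ∈ Icc 0 T, eps t ≤ M
  hlam_lb : ∃ c, 0 < c ∧ ∀ t ∈ Icc 0 T, c ≤ lam t
  hlam_ub : ∃ M, ∀ t ∈ Icc 0 T, lam t ≤ M
  hlam_deriv : ∀ t, HasDerivAt lam (lam' t) t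
  hlam'_bdd : ∃ M, ∀ t, |lam' t| ≤ M
  hnoarb : ∀ t ∈ Icc 0 T, 0 < 2 * beta t + lam' t / lam t

/-- `γ̇_t = λ'_t / λ_t`, the derivative of `γ = log λ`. -/
noncomputable def gammaDot (P : Params) (t : ℝ) : ℝ := P.lam' t / P.lam t

/-- The backward Riccati ODE system on `[0,T]` with its terminal conditions. -/
def IsRiccatiSol (P : Params) (A B C D E F K : ℝ → ℝ) : Prop :=
  (∀ t ∈ Icc (0:ℝ) P.T,
      HasDerivAt A ((P.eps t)⁻¹ * (A t + P.lam t * B t) ^ 2) t) ∧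
  A P.T = P.lam P.T ∧
  (∀ t ∈ Icc (0:ℝ) P.T,
      HasDerivAt B ((P.eps t)⁻¹ * (A t + P.lam t * B t) * (B t + P.lam t * C t)
        + P.beta t * B t) t) ∧
  B P.T = -1 ∧
  (∀ t ∈ Icc (0:ℝ) P.T,
      HasDerivAt C ((P.eps t)⁻¹ * (B t + P.lam t * C t) ^ 2 + 2 * P.beta t * C t
        - (P.lam t)⁻¹ * (2 * P.beta t + gammaDot P t)) t) ∧
  C P.T = (P.lam P.T)⁻¹ ∧
  (∀ t ∈ Icc (0:ℝ) P.T,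
      HasDerivAt D ((P.eps t)⁻¹ * (A t + P.lam t * B t) * (D t + P.lam t * E t)
        - P.theta t * (A t - D t)) t) ∧
  D P.T = 0 ∧
  (∀ t ∈ Icc (0:ℝ) P.T,
      HasDerivAt E ((P.eps t)⁻¹ * (B t + P.lam t * C t) * (D t + P.lam t * E t)
        - P.theta t * (B t - E t) + P.beta t * E t) t) ∧
  E P.T = 0 ∧
  (∀ t ∈ Icc (0:ℝ) P.T,
      HasDerivAt F ((P.eps t)⁻¹ * (D t + P.lam t * E t) ^ 2
        - 2 * P.theta t * (D t - F t)) t) ∧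
  F P.T = 0 ∧
  (∀ t ∈ Icc (0:ℝ) P.T,
      HasDerivAt K (-(P.sigma t) ^ 2 * (A t - 2 * D t + F t) / 2) t) ∧
  K P.T = 0

open Filter Topology

section

variable {f f' : ℝ → ℝ} {a b d x : ℝ}

theorem HasDerivAt.eventually_nhdsGT_lt_of_neg (h : HasDerivAt f d x) (hd : d < 0) :
    ∀ᶠ z in 𝓝[>] x, f z < f x := by
  have hslope := (hasDerivAt_iff_tendsto_slope.mp h).eventually (eventually_lt_nhds hd)
  filter_upwards [nhdsGT_le_nhdsNE x hslope, self_mem_nhdsWithin] with z hz hxz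
  exact (slope_neg_iff_of_le (le_of_lt hxz)).1 hz

theorem HasDerivAt.eventually_nhdsLT_gt_of_neg (h : HasDerivAt f d x) (hd : d < 0) :
    ∀ᶠ z in 𝓝[<] x, f x < f z := by
  have hslope := (hasDerivAt_iff_tendsto_slope.mp h).eventually (eventually_lt_nhds hd)
  filter_upwards [nhdsLT_le_nhdsNE x hslope, self_mem_nhdsWithin] with z hz hzx
  rw [slope_comm] at hz
  exact (slope_neg_iff_of_le (le_of_lt hzx)).1 hz

theorem ContinuousOn.exists_last_zero (hf : ContinuousOn f (Icc a b)) (hab : a ≤ b)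
    (ha : f a ≤ 0) (hb : 0 < f b) : ∃ τ ∈ Ico a b, f τ = 0 ∧ ∀ s ∈ Ioc τ b, 0 < f s := by
  have hZ : IsCompact (Icc a b ∩ f ⁻¹' {0}) :=
    isCompact_Icc.of_isClosed_subset
      (hf.preimage_isClosed_of_isClosed isClosed_Icc isClosed_singleton) inter_subset_left
  obtain ⟨c, hc, hfc⟩ := intermediate_value_Icc hab hf ⟨ha, hb.le⟩
  obtain ⟨τ, ⟨hτ, hfτ⟩, hmax⟩ := hZ.exists_isGreatest ⟨c, hc, hfc⟩
  refine ⟨τ, ⟨hτ.1, hτ.2.lt_of_ne ?_⟩, hfτ, fun s hs => ?_⟩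
  · rintro rfl
    exact hb.ne' hfτ
  by_contra! hfs
  obtain ⟨z, hz, hfz⟩ := intermediate_value_Icc hs.2
    (hf.mono (Icc_subset_Icc_left (hτ.1.trans hs.1.le))) ⟨hfs, hb.le⟩
  exact (hs.1.trans_le hz.1).not_ge (hmax ⟨⟨hτ.1.trans (hs.1.le.trans hz.1), hz.2⟩, hfz⟩)

theorem pos_on_Ico_of_deriv_neg_at_zeros (hd : ∀ x ∈ Icc a b, HasDerivAt f (f' x) x)
    (hb : 0 ≤ f b) (hzero : ∀ x ∈ Icc a b, f x = 0 → f' x < 0) : ∀ x ∈ Ico a b, 0 < f x := by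
  intro x hx
  by_contra! hfx
  have hxb : Icc x b ⊆ Icc a b := Icc_subset_Icc_left hx.1
  obtain ⟨c, ⟨hxc, hcb⟩, hfc⟩ : ∃ c ∈ Ioc x b, 0 < f c := by
    rcases hb.lt_or_eq with hb | hb
    · exact ⟨b, ⟨hx.2, le_rfl⟩, hb⟩
    · have hbI : b ∈ Icc a b := ⟨hx.1.trans hx.2.le, le_rfl⟩
      obtain ⟨z, hz, hzI⟩ := (((hd b hbI).eventually_nhdsLT_gt_of_neg
        (hzero b hbI hb.symm)).and (Ioo_mem_nhdsLT hx.2)).exists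
      exact ⟨z, ⟨hzI.1, hzI.2.le⟩, hb ▸ hz⟩
  have hxc' : Icc x c ⊆ Icc a b := (Icc_subset_Icc_right hcb).trans hxb
  obtain ⟨τ, hτ, hfτ, hpos⟩ :=
    (HasDerivAt.continuousOn fun z hz => hd z (hxc' hz)).exists_last_zero hxc.le hfx hfc
  have hτI : τ ∈ Icc a b := hxc' ⟨hτ.1, hτ.2.le⟩
  obtain ⟨z, hz, hzI⟩ := (((hd τ hτI).eventually_nhdsGT_lt_of_neg
    (hzero τ hτI hfτ)).and (Ioo_mem_nhdsGT hτ.2)).exists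
  exact (hpos z ⟨hzI.1, hzI.2.le⟩).not_gt (hfτ ▸ hz)

theorem nonpos_on_Icc_of_deriv_pos_of_pos (hd : ∀ x ∈ Icc a b, HasDerivAt f (f' x) x)
    (hb : f b ≤ 0) (hpos : ∀ x ∈ Icc a b, 0 < f x → 0 < f' x) : ∀ x ∈ Icc a b, f x ≤ 0 := by
  intro x hx
  by_contra! hfx
  have hxb : Icc x b ⊆ Icc a b := Icc_subset_Icc_left hx.1
  have hgap := pos_on_Ico_of_deriv_neg_at_zeros (f := fun s => f x - f s)
    (fun z hz => (hd z (hxb hz)).const_sub (f x)) (by linarith)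
    (fun z hz hz0 => neg_neg_of_pos (hpos z (hxb hz) (by linarith)))
  rcases hx.2.lt_or_eq with hxlt | rfl
  · exact (hgap x ⟨le_rfl, hxlt⟩).ne' (sub_self _)
  · exact hfx.not_ge hb

theorem pos_of_deriv_le_mul (hab : a ≤ b) (hd : ∀ x ∈ Icc a b, HasDerivAt f (f' x) x)
    {K : ℝ} (hle : ∀ x ∈ Ioo a b, f' x ≤ K * f x) (hb : 0 < f b) : 0 < f a := by
  have hg : ∀ x ∈ Icc a b, HasDerivAt (fun s => f s * Real.exp (-(K * s)))
      ((f' x - K * f x) * Real.exp (-(K * x))) x := fun x hx => by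
    refine ((hd x hx).mul (((hasDerivAt_id x).const_mul K).neg.exp)).congr_deriv ?_
    simp only [id_eq, mul_one, Pi.neg_apply]
    ring
  have hanti : AntitoneOn (fun s => f s * Real.exp (-(K * s))) (Icc a b) :=
    antitoneOn_of_hasDerivWithinAt_nonpos (convex_Icc a b) (HasDerivAt.continuousOn hg)
      (fun x hx => (hg x (interior_subset hx)).hasDerivWithinAt) fun x hx => by
        rw [interior_Icc] at hx
        exact mul_nonpos_of_nonpos_of_nonneg (sub_nonpos.2 (hle x hx)) (Real.exp_pos _).le
  have h := hanti (left_mem_Icc.2 hab) (right_mem_Icc.2 hab) hab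
  simp only at h
  exact pos_of_mul_pos_left ((mul_pos hb (Real.exp_pos _)).trans_le h) (Real.exp_pos _).le

end

namespace Params

variable (P : Params) {t : ℝ}

theorem lam_pos (ht : t ∈ Icc 0 P.T) : 0 < P.lam t :=
  let ⟨_, hc, hle⟩ := P.hlam_lb
  hc.trans_le (hle t ht)

theorem eps_pos (ht : t ∈ Icc 0 P.T) : 0 < P.eps t :=
  let ⟨_, hc, hle⟩ := P.heps_lb
  hc.trans_le (hle t ht)

theorem two_beta_add_gammaDot_pos (ht : t ∈ Icc 0 P.T) : 0 < 2 * P.beta t + gammaDot P t :=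
  P.hnoarb t ht

theorem continuous_lam : Continuous P.lam :=
  continuous_iff_continuousAt.2 fun t => (P.hlam_deriv t).continuousAt

theorem exists_eps_inv_mul_add_two_beta_le {X : ℝ → ℝ} (hX : ContinuousOn X (Icc 0 P.T)) :
    ∃ K, ∀ t ∈ Icc 0 P.T, (P.eps t)⁻¹ * X t + 2 * P.beta t ≤ K := by
  obtain ⟨c, hc, hcε⟩ := P.heps_lb
  obtain ⟨Mβ, hMβ⟩ := P.hbeta_bdd
  obtain ⟨MX, hMX⟩ := isCompact_Icc.exists_bound_of_continuousOn hX
  refine ⟨c⁻¹ * MX + 2 * Mβ, fun t ht => add_le_add ?_ ?_⟩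
  · calc (P.eps t)⁻¹ * X t ≤ (P.eps t)⁻¹ * |X t| :=
          mul_le_mul_of_nonneg_left (le_abs_self _) (inv_pos.2 (P.eps_pos ht)).le
      _ ≤ c⁻¹ * MX :=
          mul_le_mul (inv_anti₀ hc (hcε t ht)) (hMX t ht) (abs_nonneg _) (inv_pos.2 hc).le
  · linarith [le_abs_self (P.beta t), hMβ t ht]

end Params

namespace IsRiccatiSol

variable {P : Params} {A B C D E F K : ℝ → ℝ} {t : ℝ}

theorem hasDerivAt_lam_mul_C_sub_one (hsol : IsRiccatiSol P A B C D E F K)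
    (ht : t ∈ Icc 0 P.T) :
    HasDerivAt (fun s => P.lam s * C s - 1)
      ((2 * P.beta t + gammaDot P t) * (P.lam t * C t - 1)
        + P.lam t * ((P.eps t)⁻¹ * (B t + P.lam t * C t) ^ 2)) t := by
  obtain ⟨-, -, -, -, hC, -⟩ := hsol
  refine (((P.hlam_deriv t).mul (hC t ht)).sub_const 1).congr_deriv ?_
  have := (P.lam_pos ht).ne'
  simp only [gammaDot]
  field_simp
  ring

theorem hasDerivAt_det (hsol : IsRiccatiSol P A B C D E F K) (ht : t ∈ Icc 0 P.T) :
    HasDerivAt (fun s => A s * C s - B s ^ 2)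
      (((P.eps t)⁻¹ * (A t + 2 * P.lam t * B t + P.lam t ^ 2 * C t) + 2 * P.beta t)
          * (A t * C t - B t ^ 2)
        - A t * (P.lam t)⁻¹ * (2 * P.beta t + gammaDot P t)) t := by
  obtain ⟨hA, -, hB, -, hC, -⟩ := hsol
  refine (((hA t ht).mul (hC t ht)).sub ((hB t ht).pow 2)).congr_deriv ?_
  have := (P.lam_pos ht).ne'
  simp only [gammaDot]
  field_simp
  ring

theorem hasDerivAt_B_add_lam_mul_C (hsol : IsRiccatiSol P A B C D E F K)
    (ht : t ∈ Icc 0 P.T) :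
    HasDerivAt (fun s => B s + P.lam s * C s)
      (((P.eps t)⁻¹ * (A t + 2 * P.lam t * B t + P.lam t ^ 2 * C t) + P.beta t)
          * (B t + P.lam t * C t)
        - P.beta t * (P.lam t * C t)
        + (2 * P.beta t + gammaDot P t) * (P.lam t * C t - 1)) t := by
  obtain ⟨-, -, hB, -, hC, -⟩ := hsol
  refine ((hB t ht).add ((P.hlam_deriv t).mul (hC t ht))).congr_deriv ?_
  have := (P.lam_pos ht).ne'
  simp only [gammaDot]
  field_simp
  ring

theorem lam_mul_C_le_one (hsol : IsRiccatiSol P A B C D E F K) :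
    ∀ t ∈ Icc 0 P.T, P.lam t * C t ≤ 1 := by
  have hw := nonpos_on_Icc_of_deriv_pos_of_pos
    (fun t ht => hsol.hasDerivAt_lam_mul_C_sub_one ht) ?_ fun t ht hw => ?_
  · exact fun t ht => sub_nonpos.1 (hw t ht)
  · obtain ⟨-, -, -, -, -, hCT, -⟩ := hsol
    rw [hCT, mul_inv_cancel₀ (P.lam_pos ⟨P.hT.le, le_rfl⟩).ne', sub_self]
  · have := P.lam_pos ht
    have := P.eps_pos ht
    have := P.two_beta_add_gammaDot_pos ht
    positivity

theorem det_pos_of_A_pos (hsol : IsRiccatiSol P A B C D E F K) {a : ℝ} (ha : 0 ≤ a)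
    (hA : ∀ s ∈ Icc a P.T, 0 < A s) : ∀ s ∈ Ico a P.T, 0 < A s * C s - B s ^ 2 := by
  have hsub : Icc a P.T ⊆ Icc 0 P.T := Icc_subset_Icc_left ha
  refine pos_on_Ico_of_deriv_neg_at_zeros (fun s hs => hsol.hasDerivAt_det (hsub hs)) ?_
    fun s hs hdet => ?_
  · obtain ⟨-, hAT, -, hBT, -, hCT, -⟩ := hsol
    rw [hAT, hBT, hCT, mul_inv_cancel₀ (P.lam_pos ⟨P.hT.le, le_rfl⟩).ne']
    norm_num
  · rw [hdet, mul_zero, zero_sub, neg_neg_iff_pos]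
    have := hA s hs
    have := P.lam_pos (hsub hs)
    have := P.two_beta_add_gammaDot_pos (hsub hs)
    positivity

theorem det_pos_of_A_pos_Ioc (hsol : IsRiccatiSol P A B C D E F K) {τ : ℝ} (hτ0 : 0 ≤ τ)
    (hτT : τ < P.T) (hA : ∀ s ∈ Ioc τ P.T, 0 < A s) : 0 < A τ * C τ - B τ ^ 2 := by
  have hdet : ∀ s ∈ Ioo τ P.T, 0 < A s * C s - B s ^ 2 := fun s hs =>
    hsol.det_pos_of_A_pos (hτ0.trans hs.1.le) (fun r hr => hA r ⟨hs.1.trans_le hr.1, hr.2⟩)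
      s ⟨le_rfl, hs.2⟩
  obtain ⟨hAd, -, hBd, -, hCd, -⟩ := id hsol
  have hAc : ContinuousOn A (Icc 0 P.T) := HasDerivAt.continuousOn hAd
  have hBc : ContinuousOn B (Icc 0 P.T) := HasDerivAt.continuousOn hBd
  have hCc : ContinuousOn C (Icc 0 P.T) := HasDerivAt.continuousOn hCd
  have hlc := P.continuous_lam
  obtain ⟨Kc, hKc⟩ := P.exists_eps_inv_mul_add_two_beta_le
    (X := fun s => A s + 2 * P.lam s * B s + P.lam s ^ 2 * C s) (by fun_prop)
  obtain ⟨σ, hτσ, hσT⟩ := exists_between hτT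
  refine pos_of_deriv_le_mul (f := fun s => A s * C s - B s ^ 2) hτσ.le
    (fun s hs => hsol.hasDerivAt_det ⟨hτ0.trans hs.1, hs.2.trans hσT.le⟩) (K := Kc)
    (fun s hs => ?_) (hdet σ ⟨hτσ, hσT⟩)
  have hs' : s ∈ Ioo τ P.T := ⟨hs.1, hs.2.trans hσT⟩
  have hsI : s ∈ Icc 0 P.T := ⟨hτ0.trans hs.1.le, hs'.2.le⟩
  have hq : 0 < A s * (P.lam s)⁻¹ * (2 * P.beta s + gammaDot P s) := by
    have := hA s ⟨hs.1, hs'.2.le⟩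
    have := P.lam_pos hsI
    have := P.two_beta_add_gammaDot_pos hsI
    positivity
  nlinarith [mul_le_mul_of_nonneg_right (hKc s hsI) (hdet s hs').le]

theorem A_pos (hsol : IsRiccatiSol P A B C D E F K) : ∀ t ∈ Icc 0 P.T, 0 < A t := by
  intro x hx
  by_contra! hAx
  obtain ⟨hAd, hAT, -⟩ := id hsol
  obtain ⟨τ, hτ, hAτ, hApos⟩ :=
    ((HasDerivAt.continuousOn hAd).mono (Icc_subset_Icc_left hx.1)).exists_last_zero hx.2
      hAx (by rw [hAT]; exact P.lam_pos ⟨P.hT.le, le_rfl⟩)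
  have hdet := hsol.det_pos_of_A_pos_Ioc (hx.1.trans hτ.1) hτ.2 hApos
  rw [hAτ, zero_mul, zero_sub] at hdet
  linarith [sq_nonneg (B τ)]

theorem C_pos (hsol : IsRiccatiSol P A B C D E F K) : ∀ t ∈ Icc 0 P.T, 0 < C t := by
  intro t ht
  rcases ht.2.lt_or_eq with htT | rfl
  · have hdet := hsol.det_pos_of_A_pos le_rfl (fun s hs => hsol.A_pos s hs) t ⟨ht.1, htT⟩
    exact pos_of_mul_pos_right (by nlinarith [sq_nonneg (B t)]) (hsol.A_pos t ht).le
  · obtain ⟨-, -, -, -, -, hCT, -⟩ := hsol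
    rw [hCT]
    exact inv_pos.2 (P.lam_pos ht)

theorem B_add_lam_mul_C_pos (hsol : IsRiccatiSol P A B C D E F K) :
    ∀ t ∈ Ico 0 P.T, 0 < B t + P.lam t * C t := by
  refine pos_on_Ico_of_deriv_neg_at_zeros (fun s hs => hsol.hasDerivAt_B_add_lam_mul_C hs) ?_
    fun s hs hy => ?_
  · obtain ⟨-, -, -, hBT, -, hCT, -⟩ := hsol
    rw [hBT, hCT, mul_inv_cancel₀ (P.lam_pos ⟨P.hT.le, le_rfl⟩).ne']
    norm_num
  · rw [hy, mul_zero, zero_sub]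
    have hβlC : 0 < P.beta s * (P.lam s * C s) :=
      mul_pos (P.hbeta_pos s hs) (mul_pos (P.lam_pos hs) (hsol.C_pos s hs))
    have hκw : (2 * P.beta s + gammaDot P s) * (P.lam s * C s - 1) ≤ 0 :=
      mul_nonpos_of_nonneg_of_nonpos (P.two_beta_add_gammaDot_pos hs).le
        (sub_nonpos.2 (hsol.lam_mul_C_le_one s hs))
    linarith

end IsRiccatiSol

/-- The feedback coefficient for the impact state satisfies
`g_t := −ε_t⁻¹(B_t + λ_t C_t) < 0` for every `t ∈ [0,T)`. -/
theorem feedback_g_neg (P : Params)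
    (A B C D E F K : ℝ → ℝ) (hsol : IsRiccatiSol P A B C D E F K) :
    ∀ t ∈ Ico (0:ℝ) P.T, -(P.eps t)⁻¹ * (B t + P.lam t * C t) < 0 := fun t ht => by
  rw [neg_mul, neg_neg_iff_pos]
  exact mul_pos (inv_pos.2 (P.eps_pos (Ico_subset_Icc_self ht))) (hsol.B_add_lam_mul_C_pos t ht)
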